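/- Let f be locally integrable on an open interval D with f(x) ≤ 0 for almost every x ∈ D and α ∈ D. Then u_f(x) = ∫_α^x exp(2∫_α^y f(z) dz) dy is concave on D and its inverse u_f^{-1} is convex on V = u_f(D). -/

import Mathlib

/-!
The derivative of `u_f` is `exp (2 F)` with `F = ∫_α^· f`. Since `f ≤ 0`, `F` is antitone, so
`u_f'` is positive and decreasing: `u_f` is strictly increasing and concave. The inverse of a
strictly increasing concave function is convex, because concavity of `u` at a convex combination
becomes, after applying the increasing map `u⁻¹`, the convexity inequality for `u⁻¹`.
-/

open MeasureTheory intervalIntegral Real Topology Set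

section Primitive

variable {E : Type*} [NormedAddCommGroup E] [NormedSpace ℝ E] {D : Set ℝ} {a : ℝ}

theorem continuousOn_primitive_of_isOpen {f : ℝ → E} {μ : Measure ℝ} [NullSingletonClass μ]
    (hD : IsOpen D) (hf : ∀ x ∈ D, ∀ y ∈ D, IntervalIntegrable f μ x y) (ha : a ∈ D) :
    ContinuousOn (fun x => ∫ t in a..x, f t ∂μ) D := by
  intro x hx
  obtain ⟨b, c, hxbc, hbc_nhds, hbc⟩ := exists_Icc_mem_subset_of_mem_nhds (hD.mem_nhds hx)
  have hb : b ∈ D := hbc (left_mem_Icc.2 (hxbc.1.trans hxbc.2))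
  have hc : c ∈ D := hbc (right_mem_Icc.2 (hxbc.1.trans hxbc.2))
  have hl : min a b ∈ D := by rcases min_choice a b with h | h <;> rw [h] <;> assumption
  have hr : max a c ∈ D := by rcases max_choice a c with h | h <;> rw [h] <;> assumption
  have hlr : min a b ≤ max a c := (min_le_left a b).trans (le_max_left a c)
  have hcont := continuousOn_primitive_interval' (hf _ hl _ hr)
    (by rw [uIcc_of_le hlr]; exact ⟨min_le_left a b, le_max_left a c⟩)
  rw [uIcc_of_le hlr] at hcont
  exact (hcont.continuousAt (Filter.mem_of_superset hbc_nhds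
    (Icc_subset_Icc (min_le_right a b) (le_max_right a c)))).continuousWithinAt

theorem hasDerivAt_primitive_of_continuousOn [CompleteSpace E] {g : ℝ → E} (hD : IsOpen D)
    (hDoc : D.OrdConnected) (hg : ContinuousOn g D) (ha : a ∈ D) {x : ℝ} (hx : x ∈ D) :
    HasDerivAt (fun x => ∫ t in a..x, g t) (g x) x :=
  integral_hasDerivAt_right ((hg.mono (hDoc.uIcc_subset ha hx)).intervalIntegrable)
    (hg.stronglyMeasurableAtFilter hD x hx) (hg.continuousAt (hD.mem_nhds hx))

theorem antitoneOn_primitive_of_ae_nonpos {f : ℝ → ℝ} {μ : Measure ℝ} (hDoc : D.OrdConnected)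
    (hf_int : ∀ x ∈ D, ∀ y ∈ D, IntervalIntegrable f μ x y) (hf : ∀ᵐ x ∂μ, x ∈ D → f x ≤ 0)
    (ha : a ∈ D) : AntitoneOn (fun x => ∫ t in a..x, f t ∂μ) D := by
  intro x hx y hy hxy
  have hsegment : ∫ t in x..y, f t ∂μ ≤ 0 := by
    rw [integral_of_le hxy]
    refine integral_nonpos_of_ae ?_
    filter_upwards [ae_restrict_of_ae hf, ae_restrict_mem measurableSet_Ioc] with t hft ht
    exact hft (hDoc.out hx hy (Ioc_subset_Icc_self ht))
  have := integral_interval_sub_left (hf_int a ha y hy) (hf_int a ha x hx)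
  simp only at this ⊢
  linarith

end Primitive

theorem concaveOn_of_hasDerivAt_of_antitoneOn {D : Set ℝ} (hD : IsOpen D) (hconv : Convex ℝ D)
    {u g : ℝ → ℝ} (hu : ∀ x ∈ D, HasDerivAt u (g x) x) (hg : AntitoneOn g D) :
    ConcaveOn ℝ D u := by
  have hderiv : AntitoneOn (deriv u) (interior D) := by
    rw [hD.interior_eq]
    intro x hx y hy hxy
    rw [(hu x hx).deriv, (hu y hy).deriv]
    exact hg hx hy hxy
  refine hderiv.concaveOn_of_deriv hconv (fun x hx => (hu x hx).continuousAt.continuousWithinAt) ?_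
  rw [hD.interior_eq]
  exact fun x hx => (hu x hx).differentiableAt.differentiableWithinAt

theorem ConcaveOn.convexOn_image_of_leftInvOn {s : Set ℝ} {u v : ℝ → ℝ} (hu : ConcaveOn ℝ s u)
    (hu_cont : ContinuousOn u s) (hu_mono : StrictMonoOn u s) (hv : LeftInvOn v u s) :
    ConvexOn ℝ (u '' s) v := by
  have himg : Convex ℝ (u '' s) := by
    rw [convex_iff_ordConnected]
    exact (hu.1.isPreconnected.image u hu_cont).ordConnected
  refine ⟨himg, ?_⟩
  rintro _ ⟨x₁, hx₁, rfl⟩ _ ⟨x₂, hx₂, rfl⟩ a b ha hb hab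
  obtain ⟨x, hx, hux⟩ := himg ⟨x₁, hx₁, rfl⟩ ⟨x₂, hx₂, rfl⟩ ha hb hab
  rw [← hux, hv hx, hv hx₁, hv hx₂]
  refine (hu_mono.le_iff_le hx (hu.1 hx₁ hx₂ ha hb hab)).1 ?_
  rw [hux]
  exact hu.2 hx₁ hx₂ ha hb hab

theorem uf_concave_inverse_convex_general
    (D : Set ℝ) (hD : IsOpen D) (hDoc : D.OrdConnected)
    (f : ℝ → ℝ)
    (hloc : ∀ a ∈ D, ∀ b ∈ D, IntervalIntegrable f volume a b)
    (hf : ∀ᵐ x ∂(volume : Measure ℝ), x ∈ D → f x ≤ 0)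
    (α : ℝ) (hα : α ∈ D)
    (u : ℝ → ℝ) (hu : ∀ x, u x = ∫ y in α..x, Real.exp (2 * ∫ z in α..y, f z)) :
    ConcaveOn ℝ D u ∧
    ∀ v : ℝ → ℝ, Set.InvOn v u D (u '' D) → ConvexOn ℝ (u '' D) v := by
  set F : ℝ → ℝ := fun y => ∫ z in α..y, f z
  have hF_cont : ContinuousOn F D := continuousOn_primitive_of_isOpen hD hloc hα
  have hF_anti : AntitoneOn F D := antitoneOn_primitive_of_ae_nonpos hDoc hloc hf hα
  set g : ℝ → ℝ := fun y => exp (2 * F y)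
  have hg_anti : AntitoneOn g D := fun x hx y hy hxy =>
    exp_le_exp.2 (by linarith [hF_anti hx hy hxy])
  have hu' : ∀ x ∈ D, HasDerivAt u (g x) x := by
    rw [funext hu]
    exact fun x hx => hasDerivAt_primitive_of_continuousOn hD hDoc (by fun_prop) hα hx
  have hu_cont : ContinuousOn u D := fun x hx => (hu' x hx).continuousAt.continuousWithinAt
  have hconc : ConcaveOn ℝ D u := concaveOn_of_hasDerivAt_of_antitoneOn hD hDoc.convex hu' hg_anti
  have hmono : StrictMonoOn u D := strictMonoOn_of_hasDerivWithinAt_pos hDoc.convex hu_cont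
    (fun x hx => (hu' x (interior_subset hx)).hasDerivWithinAt) (fun _ _ => exp_pos _)
  exact ⟨hconc, fun v hv => hconc.convexOn_image_of_leftInvOn hu_cont hmono hv.1⟩

/-- If `f ≤ 0` a.e. on `D`, then `u_f` is concave on `D` and its inverse is convex
on `V = u_f(D)`. -/
theorem uf_concave_inverse_convex
    (D : Set ℝ) (hD : IsOpen D) (hDoc : D.OrdConnected) (hne : D.Nonempty)
    (f : ℝ → ℝ)
    (hloc : ∀ a ∈ D, ∀ b ∈ D, IntervalIntegrable f volume a b)
    (hf : ∀ᵐ x ∂(volume : Measure ℝ), x ∈ D → f x ≤ 0)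
    (α : ℝ) (hα : α ∈ D)
    (u : ℝ → ℝ) (hu : ∀ x, u x = ∫ y in α..x, Real.exp (2 * ∫ z in α..y, f z)) :
    ConcaveOn ℝ D u ∧
    ∀ v : ℝ → ℝ, Set.InvOn v u D (u '' D) → ConvexOn ℝ (u '' D) v :=
  uf_concave_inverse_convex_general D hD hDoc f hloc hf α hα u hu
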